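/- Let α, β, γ ∈ (0,1). (i) If α + γ > 1, then for every q ∈ [0, 1−α] there exists a constant C > 0, depending only on α, β, γ, q, such that 𝔅_2(a,b) ≤ C · |a|^{−q} · |b−a|^{−γ+q} for all real a, b with a ≠ 0 and b − a ≠ 0. (ii) If α + γ < 1, then there exists a constant C > 0, depending only on α, β, γ, such that 𝔅_2(a,b) ≤ C · (|a| + |b−a|)^{−γ} for all real a, b with (a, b−a) ≠ (0,0); consequently, for any q_1, q_2 ≥ 0 with q_1 + q_2 ≤ γ, 𝔅_2(a,b) ≤ C · |a|^{−q_1} · |b−a|^{−q_2} · |b|^{−γ+q_1+q_2} whenever a, b−a, b are all nonzero. -/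

import Mathlib

open MeasureTheory Real ENNReal

/-- `𝔅_1(a,b) := ∫_0^{1/2} u^{−β} (1−u)^{−α} |au − b|^{−γ} du ∈ [0,∞]`. -/
noncomputable def B1 (α β γ a b : ℝ) : ℝ≥0∞ :=
  ∫⁻ u in Set.Ioo (0 : ℝ) (1/2),
    ENNReal.ofReal (u ^ (-β) * (1 - u) ^ (-α) * |a * u - b| ^ (-γ))

/-- `𝔅_2(a,b) := ∫_{1/2}^1 u^{−β} (1−u)^{−α} |au − b|^{−γ} du ∈ [0,∞]`. -/
noncomputable def B2 (α β γ a b : ℝ) : ℝ≥0∞ :=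
  ∫⁻ u in Set.Ioo (1/2 : ℝ) 1,
    ENNReal.ofReal (u ^ (-β) * (1 - u) ^ (-α) * |a * u - b| ^ (-γ))

/-!
Substituting `u = 1 - t` and bounding `u^{-β} ≤ 2^β` reduces `𝔅_2(a,b)` to
`J = ∫_0^{1/2} t^{-α} |a t + d|^{-γ} dt` with `d = b - a`. If `|a| ≤ |d|`, then
`|a t + d| ≥ |d| / 2` and `J ≲ |d|^{-γ}`. Otherwise `J = |a|^{-γ} ∫_0^{1/2} t^{-α} |t - c|^{-γ} dt`
with `c = -d/a`, `|c| < 1`. When `α + γ > 1` this integral is at most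
`∫_0^∞ t^{-α} |t - |c||^{-γ} dt = |c|^{1-α-γ} ∫_0^∞ s^{-α} |s - 1|^{-γ} ds` by scaling, and the last
integral converges. When `α + γ < 1`, weighted AM-GM gives
`t^{-α} u^{-γ} ≤ t^{-(α+γ)} + u^{-(α+γ)}`, and both terms have integrals bounded uniformly
in `|c| ≤ 1`.
The stated bounds then follow by comparing powers of `|a|`, `|d|`, `|b|` and `|a| + |d|`.
-/

open Set

theorem rpow_neg_le_two_rpow_mul_rpow_neg {x y e : ℝ} (hy : 0 < y) (hxy : y / 2 ≤ x)
    (he : 0 ≤ e) : x ^ (-e) ≤ 2 ^ e * y ^ (-e) := by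
  calc x ^ (-e) ≤ (y / 2) ^ (-e) :=
        Real.rpow_le_rpow_of_nonpos (by positivity) hxy (by linarith)
    _ = 2 ^ e * y ^ (-e) := by
        rw [Real.div_rpow hy.le zero_le_two, Real.rpow_neg zero_le_two, div_inv_eq_mul, mul_comm]

theorem rpow_mul_rpow_le_rpow_mul_rpow {x y p p' r r' : ℝ} (hx : 0 < x) (hxy : x ≤ y)
    (hp : p ≤ p') (h : p + r = p' + r') : x ^ p' * y ^ r' ≤ x ^ p * y ^ r := by
  have hy : 0 < y := hx.trans_le hxy
  calc x ^ p' * y ^ r' = x ^ p * y ^ r * (x ^ (p' - p) * y ^ (r' - r)) := by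
        rw [mul_mul_mul_comm, ← Real.rpow_add hx, ← Real.rpow_add hy, add_sub_cancel,
          add_sub_cancel]
    _ ≤ x ^ p * y ^ r * (y ^ (p' - p) * y ^ (r' - r)) := by gcongr
    _ = x ^ p * y ^ r := by
        rw [← Real.rpow_add hy, show p' - p + (r' - r) = 0 by linarith, Real.rpow_zero, mul_one]

theorem rpow_neg_mul_rpow_neg_le_add {x y α γ : ℝ} (hx : 0 ≤ x) (hy : 0 ≤ y) (hα : 0 ≤ α)
    (hγ : 0 ≤ γ) (hαγ : 0 < α + γ) :
    x ^ (-α) * y ^ (-γ) ≤ x ^ (-(α + γ)) + y ^ (-(α + γ)) := by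
  have hpow : ∀ {z : ℝ} (e : ℝ), 0 ≤ z → z ^ (-e) = (z ^ (-(α + γ))) ^ (e / (α + γ)) :=
    fun e hz => by rw [← Real.rpow_mul hz]; congr 1; field_simp
  rw [hpow α hx, hpow γ hy]
  calc _ ≤ α / (α + γ) * x ^ (-(α + γ)) + γ / (α + γ) * y ^ (-(α + γ)) :=
        geom_mean_le_arith_mean2_weighted (by positivity) (by positivity) (by positivity)
          (by positivity) (by field_simp)
    _ ≤ x ^ (-(α + γ)) + y ^ (-(α + γ)) := by
        gcongr <;> apply mul_le_of_le_one_left (by positivity) <;>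
          rw [div_le_one hαγ] <;> linarith

theorem rpow_neg_add_le_rpow_neg_mul_rpow_neg_mul_rpow {x y z γ q₁ q₂ : ℝ} (hx : 0 < x)
    (hy : 0 < y) (hz : 0 < z) (hzxy : z ≤ x + y) (hq₁ : 0 ≤ q₁) (hq₂ : 0 ≤ q₂)
    (hq : q₁ + q₂ ≤ γ) :
    (x + y) ^ (-γ) ≤ x ^ (-q₁) * y ^ (-q₂) * z ^ (-γ + q₁ + q₂) := by
  have hxy : 0 < x + y := by positivity
  have h_split : (x + y) ^ (-γ) = (x + y) ^ (-q₁) * (x + y) ^ (-q₂) * (x + y) ^ (-γ + q₁ + q₂) := by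
    rw [← Real.rpow_add hxy, ← Real.rpow_add hxy]
    ring_nf
  rw [h_split]
  gcongr ?_ * ?_ * ?_
  · exact Real.rpow_le_rpow_of_nonpos hx (by linarith) (by linarith)
  · exact Real.rpow_le_rpow_of_nonpos hy (by linarith) (by linarith)
  · exact Real.rpow_le_rpow_of_nonpos hz hzxy (by linarith)

theorem intervalIntegrable_abs_rpow {r : ℝ} (hr : -1 < r) (a b : ℝ) :
    IntervalIntegrable (fun x => |x| ^ r) volume a b := by
  have h_nonneg : ∀ c, 0 ≤ c → IntervalIntegrable (fun x => |x| ^ r) volume 0 c := fun c hc =>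
    (intervalIntegral.intervalIntegrable_rpow' hr).congr fun x hx => by
      rw [uIoc_of_le hc] at hx
      simp [abs_of_pos hx.1]
  have h : ∀ c, IntervalIntegrable (fun x => |x| ^ r) volume 0 c := by
    intro c
    rcases le_total 0 c with hc | hc
    · exact h_nonneg c hc
    · rw [IntervalIntegrable.iff_comp_neg]
      simpa using h_nonneg (-c) (by linarith)
  exact (h a).symm.trans (h b)

theorem setLIntegral_Ioi_zero_eq_ofReal_mul_comp_mul_left (f : ℝ → ℝ≥0∞) {r : ℝ} (hr : 0 < r) :
    ∫⁻ t in Ioi 0, f t = ENNReal.ofReal r * ∫⁻ s in Ioi 0, f (r * s) := by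
  have he : MeasurableEmbedding (r * ·) :=
    (Homeomorph.mulLeft₀ r hr.ne').isClosedEmbedding.measurableEmbedding
  conv_lhs => rw [← Real.smul_map_volume_mul_left hr.ne']
  rw [Measure.restrict_smul, lintegral_smul_measure, he.restrict_map, he.lintegral_map,
    preimage_const_mul_Ioi₀ _ hr, zero_div, abs_of_pos hr, smul_eq_mul]

theorem setLIntegral_Ioo_comp_sub_right (f : ℝ → ℝ≥0∞) (a b c : ℝ) :
    ∫⁻ t in Ioo a b, f (t - c) = ∫⁻ s in Ioo (a - c) (b - c), f s := by
  simpa [preimage_sub_const_Ioo] using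
    (measurePreserving_sub_right volume c).setLIntegral_comp_preimage_emb
      (measurableEmbedding_subRight c) f (Ioo (a - c) (b - c))

theorem B2_le_two_rpow_mul_setLIntegral {α β γ : ℝ} (hβ : 0 ≤ β) (a b : ℝ) :
    B2 α β γ a b ≤ ENNReal.ofReal (2 ^ β) *
      ∫⁻ t in Ioo 0 (1 / 2), ENNReal.ofReal (t ^ (-α) * |a * t + (b - a)| ^ (-γ)) := by
  have h_reflect : B2 α β γ a b = ∫⁻ t in Ioo 0 (1 / 2),
      ENNReal.ofReal ((1 - t) ^ (-β) * (t ^ (-α) * |a * t + (b - a)| ^ (-γ))) := by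
    rw [B2, ← (Measure.measurePreserving_sub_left volume 1).setLIntegral_comp_preimage_emb
      (measurableEmbedding_subLeft 1), preimage_const_sub_Ioo, sub_self,
      show (1 : ℝ) - 1 / 2 = 1 / 2 by norm_num]
    refine setLIntegral_congr_fun measurableSet_Ioo fun t _ => ?_
    rw [_root_.sub_sub_cancel, show a * (1 - t) - b = -(a * t + (b - a)) by ring, abs_neg,
      mul_assoc]
  rw [h_reflect, ← lintegral_const_mul' _ _ ENNReal.ofReal_ne_top]
  refine setLIntegral_mono' measurableSet_Ioo fun t ht => ?_
  have h_le : (1 - t) ^ (-β) ≤ 2 ^ β := by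
    simpa using rpow_neg_le_two_rpow_mul_rpow_neg one_pos (by linarith [ht.2]) hβ
  rw [← ENNReal.ofReal_mul (by positivity)]
  gcongr
  exact mul_nonneg (Real.rpow_nonneg ht.1.le _) (Real.rpow_nonneg (abs_nonneg _) _)

theorem setLIntegral_rpow_mul_abs_mul_add_rpow {α γ a : ℝ} (ha : a ≠ 0) (d : ℝ) (s : Set ℝ) :
    ∫⁻ t in s, ENNReal.ofReal (t ^ (-α) * |a * t + d| ^ (-γ)) =
      ENNReal.ofReal (|a| ^ (-γ)) * ∫⁻ t in s, ENNReal.ofReal (t ^ (-α) * |t - -d / a| ^ (-γ)) := by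
  rw [← lintegral_const_mul' _ _ ENNReal.ofReal_ne_top]
  refine lintegral_congr fun t => ?_
  have h_abs : |a * t + d| = |a| * |t - -d / a| := by
    rw [← abs_mul]
    congr 1
    field_simp
    ring
  rw [h_abs, Real.mul_rpow (abs_nonneg _) (abs_nonneg _),
    ← ENNReal.ofReal_mul (Real.rpow_nonneg (abs_nonneg _) _)]
  congr 1
  ring

theorem exists_setLIntegral_le_of_abs_le {α γ : ℝ} (hα : α < 1) (hγ : 0 ≤ γ) :
    ∃ C, 0 ≤ C ∧ ∀ a d : ℝ, d ≠ 0 → |a| ≤ |d| →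
      ∫⁻ t in Ioo 0 (1 / 2), ENNReal.ofReal (t ^ (-α) * |a * t + d| ^ (-γ)) ≤
        ENNReal.ofReal (C * |d| ^ (-γ)) := by
  have h_fin : ∫⁻ t in Ioo (0 : ℝ) (1 / 2), ENNReal.ofReal (t ^ (-α)) ≠ ∞ :=
    ((intervalIntegral.integrableOn_Ioo_rpow_iff (by norm_num)).2
      (by linarith)).setLIntegral_lt_top.ne
  refine ⟨2 ^ γ * (∫⁻ t in Ioo (0 : ℝ) (1 / 2), ENNReal.ofReal (t ^ (-α))).toReal,
    by positivity, fun a d hd had => ?_⟩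
  have hd' : 0 < |d| := abs_pos.2 hd
  calc ∫⁻ t in Ioo 0 (1 / 2), ENNReal.ofReal (t ^ (-α) * |a * t + d| ^ (-γ))
      ≤ ∫⁻ t in Ioo 0 (1 / 2), ENNReal.ofReal (2 ^ γ * |d| ^ (-γ)) * ENNReal.ofReal (t ^ (-α)) := by
        refine setLIntegral_mono' measurableSet_Ioo fun t ht => ?_
        have h_half : |d| / 2 ≤ |a * t + d| := by
          have : |a * t| ≤ |d| / 2 := by
            rw [abs_mul, abs_of_pos ht.1]
            nlinarith [ht.2, abs_nonneg a]
          have := abs_sub_abs_le_abs_sub d (-(a * t))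
          rw [abs_neg, sub_neg_eq_add, add_comm] at this
          linarith
        rw [← ENNReal.ofReal_mul (by positivity), mul_comm _ (t ^ (-α))]
        exact ENNReal.ofReal_le_ofReal (mul_le_mul_of_nonneg_left
          (rpow_neg_le_two_rpow_mul_rpow_neg hd' h_half hγ) (Real.rpow_nonneg ht.1.le _))
    _ = ENNReal.ofReal (2 ^ γ * (∫⁻ t in Ioo (0 : ℝ) (1 / 2), ENNReal.ofReal (t ^ (-α))).toReal *
          |d| ^ (-γ)) := by
        rw [lintegral_const_mul' _ _ ENNReal.ofReal_ne_top, mul_right_comm (2 ^ γ),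
          ENNReal.ofReal_mul (by positivity : (0 : ℝ) ≤ 2 ^ γ * |d| ^ (-γ)),
          ENNReal.ofReal_toReal h_fin]

theorem rpow_neg_mul_abs_sub_one_rpow_neg_le {s α γ : ℝ} (hs : 0 < s) (hα : 0 ≤ α)
    (hγ : 0 ≤ γ) : s ^ (-α) * |s - 1| ^ (-γ) ≤ 2 ^ γ * s ^ (-α) + 2 ^ α * |s - 1| ^ (-γ) := by
  have hs₀ : 0 ≤ s ^ (-α) := Real.rpow_nonneg hs.le _
  have hs₁ : 0 ≤ |s - 1| ^ (-γ) := Real.rpow_nonneg (abs_nonneg _) _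
  rcases le_total s (1 / 2) with h | h
  · have : |s - 1| ^ (-γ) ≤ 2 ^ γ := by
      simpa using rpow_neg_le_two_rpow_mul_rpow_neg one_pos
        (by rw [abs_of_neg (by linarith)]; linarith) hγ
    calc s ^ (-α) * |s - 1| ^ (-γ) ≤ s ^ (-α) * 2 ^ γ := by gcongr
      _ ≤ _ := by rw [mul_comm]; exact le_add_of_nonneg_right (by positivity)
  · have : s ^ (-α) ≤ 2 ^ α := by simpa using rpow_neg_le_two_rpow_mul_rpow_neg one_pos h hα
    calc s ^ (-α) * |s - 1| ^ (-γ) ≤ 2 ^ α * |s - 1| ^ (-γ) := by gcongr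
      _ ≤ _ := le_add_of_nonneg_left (by positivity)

theorem integrableOn_rpow_neg_mul_abs_sub_one_rpow_neg {α γ : ℝ} (hα₀ : 0 ≤ α) (hα : α < 1)
    (hγ₀ : 0 ≤ γ) (hγ : γ < 1) (hαγ : 1 < α + γ) :
    IntegrableOn (fun s : ℝ => s ^ (-α) * |s - 1| ^ (-γ)) (Ioi 0) := by
  have h_meas : AEStronglyMeasurable (fun s : ℝ => s ^ (-α) * |s - 1| ^ (-γ)) :=
    (by fun_prop : Measurable (fun s : ℝ => s ^ (-α) * |s - 1| ^ (-γ))).aestronglyMeasurable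
  rw [← Ioc_union_Ioi_eq_Ioi zero_le_two]
  refine IntegrableOn.union ?_ ?_
  · have h_dom :
        IntegrableOn (fun s : ℝ => 2 ^ γ * s ^ (-α) + 2 ^ α * |s - 1| ^ (-γ)) (Ioc 0 2) := by
      rw [← intervalIntegrable_iff_integrableOn_Ioc_of_le zero_le_two]
      refine ((intervalIntegral.intervalIntegrable_rpow' (by linarith)).const_mul _).add
        (IntervalIntegrable.const_mul ?_ _)
      have := (intervalIntegrable_abs_rpow (r := -γ) (by linarith) (-1) 1).comp_sub_right 1
      rwa [neg_add_cancel, one_add_one_eq_two] at this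
    refine h_dom.mono' h_meas.restrict (ae_restrict_of_forall_mem measurableSet_Ioc fun s hs => ?_)
    rw [Real.norm_eq_abs, abs_of_nonneg (by have := hs.1; positivity)]
    exact rpow_neg_mul_abs_sub_one_rpow_neg_le hs.1 hα₀ hγ₀
  · have h_dom : IntegrableOn (fun s : ℝ => 2 ^ γ * s ^ (-(α + γ))) (Ioi 2) :=
      (integrableOn_Ioi_rpow_of_lt (by linarith) two_pos).const_mul _
    refine h_dom.mono' h_meas.restrict (ae_restrict_of_forall_mem measurableSet_Ioi fun s hs => ?_)
    have hs₂ : 2 < s := hs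
    have hs₀ : 0 < s := two_pos.trans hs₂
    rw [Real.norm_eq_abs, abs_of_nonneg (by positivity), neg_add, Real.rpow_add hs₀]
    have : |s - 1| ^ (-γ) ≤ 2 ^ γ * s ^ (-γ) :=
      rpow_neg_le_two_rpow_mul_rpow_neg hs₀ (by rw [abs_of_pos (by linarith)]; linarith) hγ₀
    calc s ^ (-α) * |s - 1| ^ (-γ) ≤ s ^ (-α) * (2 ^ γ * s ^ (-γ)) := by gcongr
      _ = 2 ^ γ * (s ^ (-α) * s ^ (-γ)) := by ring

theorem setLIntegral_Ioi_rpow_neg_mul_abs_sub_rpow_neg {α γ r : ℝ} (hr : 0 < r) :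
    ∫⁻ t in Ioi 0, ENNReal.ofReal (t ^ (-α) * |t - r| ^ (-γ)) =
      ENNReal.ofReal (r ^ (1 - α - γ)) *
        ∫⁻ s in Ioi 0, ENNReal.ofReal (s ^ (-α) * |s - 1| ^ (-γ)) := by
  rw [setLIntegral_Ioi_zero_eq_ofReal_mul_comp_mul_left _ hr,
    ← lintegral_const_mul' _ _ ENNReal.ofReal_ne_top,
    ← lintegral_const_mul' _ _ ENNReal.ofReal_ne_top]
  refine setLIntegral_congr_fun measurableSet_Ioi fun s hs => ?_
  rw [← ENNReal.ofReal_mul hr.le, ← ENNReal.ofReal_mul (by positivity)]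
  congr 1
  rw [show r * s - r = r * (s - 1) by ring, abs_mul, abs_of_pos hr,
    Real.mul_rpow hr.le (le_of_lt hs), Real.mul_rpow hr.le (abs_nonneg _),
    show 1 - α - γ = 1 + -α + -γ by ring, Real.rpow_add hr, Real.rpow_add hr, Real.rpow_one]
  ring

theorem exists_setLIntegral_le_rpow_of_one_lt_add {α γ : ℝ} (hα₀ : 0 ≤ α) (hα : α < 1)
    (hγ₀ : 0 ≤ γ) (hγ : γ < 1) (hαγ : 1 < α + γ) :
    ∃ C, 0 ≤ C ∧ ∀ c : ℝ, c ≠ 0 →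
      ∫⁻ t in Ioo 0 (1 / 2), ENNReal.ofReal (t ^ (-α) * |t - c| ^ (-γ)) ≤
        ENNReal.ofReal (C * |c| ^ (1 - α - γ)) := by
  have hg := integrableOn_rpow_neg_mul_abs_sub_one_rpow_neg hα₀ hα hγ₀ hγ hαγ
  have hg_nonneg : ∀ s ∈ Ioi (0 : ℝ), 0 ≤ s ^ (-α) * |s - 1| ^ (-γ) := fun s hs => by
    have := hs.out; positivity
  refine ⟨∫ s in Ioi 0, s ^ (-α) * |s - 1| ^ (-γ),
    setIntegral_nonneg measurableSet_Ioi hg_nonneg, fun c hc => ?_⟩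
  have hr : 0 < |c| := abs_pos.2 hc
  set r := |c|
  calc ∫⁻ t in Ioo 0 (1 / 2), ENNReal.ofReal (t ^ (-α) * |t - c| ^ (-γ))
      ≤ ∫⁻ t in Ioi 0, ENNReal.ofReal (t ^ (-α) * |t - c| ^ (-γ)) :=
        lintegral_mono_set Ioo_subset_Ioi_self
    _ ≤ ∫⁻ t in Ioi 0, ENNReal.ofReal (t ^ (-α) * |t - r| ^ (-γ)) := by
        refine setLIntegral_mono_ae (by fun_prop) ?_
        -- at `t = r` the pointwise bound fails, since `0 ^ (-γ) = 0`
        filter_upwards [Measure.ae_ne volume r] with t htr ht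
        have h_le : |t - r| ≤ |t - c| := by
          simpa [abs_of_pos (mem_Ioi.1 ht)] using abs_abs_sub_abs_le_abs_sub t c
        exact ENNReal.ofReal_le_ofReal (mul_le_mul_of_nonneg_left
          (Real.rpow_le_rpow_of_nonpos (abs_pos.2 (sub_ne_zero.2 htr)) h_le (by linarith))
          (Real.rpow_nonneg (le_of_lt ht) _))
    _ = ENNReal.ofReal ((∫ s in Ioi 0, s ^ (-α) * |s - 1| ^ (-γ)) * r ^ (1 - α - γ)) := by
        rw [setLIntegral_Ioi_rpow_neg_mul_abs_sub_rpow_neg hr, ← ofReal_integral_eq_lintegral_ofReal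
          hg (ae_restrict_of_forall_mem measurableSet_Ioi hg_nonneg),
          ← ENNReal.ofReal_mul (by positivity), mul_comm]

theorem exists_setLIntegral_le_of_add_lt_one {α γ : ℝ} (hα : 0 < α) (hγ : 0 ≤ γ)
    (hαγ : α + γ < 1) :
    ∃ C, 0 ≤ C ∧ ∀ c ∈ Icc (-1 : ℝ) 1,
      ∫⁻ t in Ioo 0 (1 / 2), ENNReal.ofReal (t ^ (-α) * |t - c| ^ (-γ)) ≤ ENNReal.ofReal C := by
  set A := ∫⁻ t in Ioo (0 : ℝ) (1 / 2), ENNReal.ofReal (t ^ (-(α + γ)))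
  set B := ∫⁻ s in Ioo (-1 : ℝ) (3 / 2), ENNReal.ofReal (|s| ^ (-(α + γ)))
  have hA : A ≠ ∞ :=
    ((intervalIntegral.integrableOn_Ioo_rpow_iff (by norm_num)).2
      (by linarith)).setLIntegral_lt_top.ne
  have hB : B ≠ ∞ := by
    refine (IntegrableOn.setLIntegral_lt_top ?_).ne
    rw [← intervalIntegrable_iff_integrableOn_Ioo_of_le (by norm_num)]
    exact intervalIntegrable_abs_rpow (by linarith) _ _
  refine ⟨(A + B).toReal, ENNReal.toReal_nonneg, fun c hc => ?_⟩
  rw [ENNReal.ofReal_toReal (ENNReal.add_ne_top.2 ⟨hA, hB⟩)]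
  calc ∫⁻ t in Ioo 0 (1 / 2), ENNReal.ofReal (t ^ (-α) * |t - c| ^ (-γ))
      ≤ ∫⁻ t in Ioo 0 (1 / 2),
          (ENNReal.ofReal (t ^ (-(α + γ))) + ENNReal.ofReal (|t - c| ^ (-(α + γ)))) :=
        setLIntegral_mono' measurableSet_Ioo fun t ht =>
          (ENNReal.ofReal_le_ofReal (rpow_neg_mul_rpow_neg_le_add ht.1.le (abs_nonneg _) hα.le hγ
            (by linarith))).trans ENNReal.ofReal_add_le
    _ = A + ∫⁻ t in Ioo 0 (1 / 2), ENNReal.ofReal (|t - c| ^ (-(α + γ))) :=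
        lintegral_add_left (by fun_prop) _
    _ ≤ A + B := by
        gcongr
        rw [setLIntegral_Ioo_comp_sub_right (fun s => ENNReal.ofReal (|s| ^ (-(α + γ))))]
        exact lintegral_mono_set (Ioo_subset_Ioo (by linarith [hc.2]) (by linarith [hc.1]))

theorem exists_B2_le_of_one_lt_add {α β γ : ℝ} (hα₀ : 0 ≤ α) (hα : α < 1) (hβ : 0 ≤ β)
    (hγ₀ : 0 ≤ γ) (hγ : γ < 1) (hαγ : 1 < α + γ) {q : ℝ} (hq₀ : 0 ≤ q) (hq : q ≤ 1 - α) :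
    ∃ C, 0 < C ∧ ∀ a b : ℝ, a ≠ 0 → b - a ≠ 0 →
      B2 α β γ a b ≤ ENNReal.ofReal (C * |a| ^ (-q) * |b - a| ^ (-γ + q)) := by
  obtain ⟨C₁, hC₁, h_near⟩ := exists_setLIntegral_le_of_abs_le hα hγ₀
  obtain ⟨C₂, hC₂, h_far⟩ := exists_setLIntegral_le_rpow_of_one_lt_add hα₀ hα hγ₀ hγ hαγ
  refine ⟨2 ^ β * (C₁ + C₂ + 1), by positivity, fun a b ha hd => ?_⟩
  have ha' : 0 < |a| := abs_pos.2 ha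
  have hd' : 0 < |b - a| := abs_pos.2 hd
  refine (B2_le_two_rpow_mul_setLIntegral hβ a b).trans ?_
  rw [mul_assoc, mul_assoc, ENNReal.ofReal_mul (by positivity)]
  refine mul_le_mul_right ?_ _
  rcases le_or_gt |a| |b - a| with h | h
  · refine (h_near a (b - a) hd h).trans (ENNReal.ofReal_le_ofReal ?_)
    have h_interp : |b - a| ^ (-γ) ≤ |a| ^ (-q) * |b - a| ^ (-γ + q) := by
      simpa using rpow_mul_rpow_le_rpow_mul_rpow (p' := 0) (r' := -γ) ha' h
        (neg_nonpos.2 hq₀) (by ring)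
    gcongr
    linarith
  · have hc : -(b - a) / a ≠ 0 := div_ne_zero (neg_ne_zero.2 hd) ha
    rw [setLIntegral_rpow_mul_abs_mul_add_rpow ha]
    refine (mul_le_mul_right (h_far _ hc) _).trans ?_
    rw [← ENNReal.ofReal_mul (by positivity)]
    refine ENNReal.ofReal_le_ofReal ?_
    have h_interp : |b - a| ^ (1 - α - γ) * |a| ^ (α - 1) ≤ |b - a| ^ (-γ + q) * |a| ^ (-q) :=
      rpow_mul_rpow_le_rpow_mul_rpow hd' h.le (by linarith) (by ring)
    have h_pow : |a| ^ (-γ) / |a| ^ (1 - α - γ) = |a| ^ (α - 1) := by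
      rw [← Real.rpow_sub ha']
      congr 1
      ring
    calc |a| ^ (-γ) * (C₂ * |-(b - a) / a| ^ (1 - α - γ))
        = C₂ * (|b - a| ^ (1 - α - γ) * |a| ^ (α - 1)) := by
          rw [abs_div, abs_neg, Real.div_rpow hd'.le ha'.le, ← h_pow]
          simp only [div_eq_mul_inv]
          ac_rfl
      _ ≤ (C₁ + C₂ + 1) * (|a| ^ (-q) * |b - a| ^ (-γ + q)) := by
          rw [mul_comm (|a| ^ (-q))]
          gcongr
          linarith

theorem exists_B2_le_rpow_abs_add_abs {α β γ : ℝ} (hα₀ : 0 < α) (hβ : 0 ≤ β) (hγ₀ : 0 ≤ γ)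
    (hαγ : α + γ < 1) :
    ∃ C, 0 < C ∧ ∀ a b : ℝ, ¬(a = 0 ∧ b - a = 0) →
      B2 α β γ a b ≤ ENNReal.ofReal (C * (|a| + |b - a|) ^ (-γ)) := by
  obtain ⟨C₁, hC₁, h_near⟩ := exists_setLIntegral_le_of_abs_le (α := α) (by linarith) hγ₀
  obtain ⟨C₂, hC₂, h_far⟩ := exists_setLIntegral_le_of_add_lt_one hα₀ hγ₀ hαγ
  refine ⟨2 ^ β * ((C₁ + C₂ + 1) * 2 ^ γ), by positivity, fun a b hab => ?_⟩
  have hS : 0 < |a| + |b - a| := by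
    rcases not_and_or.1 hab with h | h <;> positivity
  refine (B2_le_two_rpow_mul_setLIntegral hβ a b).trans ?_
  rw [mul_assoc, mul_assoc, ENNReal.ofReal_mul (by positivity)]
  refine mul_le_mul_right ?_ _
  rcases le_or_gt |a| |b - a| with h | h
  · have hd : b - a ≠ 0 := fun hd => hab ⟨abs_nonpos_iff.1 (by simpa [hd] using h), hd⟩
    refine (h_near a (b - a) hd h).trans (ENNReal.ofReal_le_ofReal ?_)
    have : |b - a| ^ (-γ) ≤ 2 ^ γ * (|a| + |b - a|) ^ (-γ) :=
      rpow_neg_le_two_rpow_mul_rpow_neg hS (by linarith) hγ₀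
    calc C₁ * |b - a| ^ (-γ) ≤ C₁ * (2 ^ γ * (|a| + |b - a|) ^ (-γ)) := by gcongr
      _ ≤ (C₁ + C₂ + 1) * (2 ^ γ * (|a| + |b - a|) ^ (-γ)) := by gcongr; linarith
  · have ha : a ≠ 0 := abs_pos.1 ((abs_nonneg _).trans_lt h)
    have hc : -(b - a) / a ∈ Icc (-1 : ℝ) 1 := by
      rw [mem_Icc, ← abs_le, abs_div, abs_neg, div_le_one (abs_pos.2 ha)]
      exact h.le
    rw [setLIntegral_rpow_mul_abs_mul_add_rpow ha]
    refine (mul_le_mul_right (h_far _ hc) _).trans ?_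
    rw [← ENNReal.ofReal_mul (by positivity)]
    refine ENNReal.ofReal_le_ofReal ?_
    have : |a| ^ (-γ) ≤ 2 ^ γ * (|a| + |b - a|) ^ (-γ) :=
      rpow_neg_le_two_rpow_mul_rpow_neg hS (by linarith) hγ₀
    calc |a| ^ (-γ) * C₂ ≤ (2 ^ γ * (|a| + |b - a|) ^ (-γ)) * C₂ := by gcongr
      _ ≤ (C₁ + C₂ + 1) * (2 ^ γ * (|a| + |b - a|) ^ (-γ)) := by
          rw [mul_comm]
          gcongr
          linarith

/-- Bounds for `𝔅_2`. (i) If `α + γ > 1`, then for every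
`q ∈ [0, 1−α]` there is `C > 0` with `𝔅_2(a,b) ≤ C |a|^{−q} |b−a|^{−γ+q}` for all
`a ≠ 0`, `b − a ≠ 0`. (ii) If `α + γ < 1`, there is `C > 0` with
`𝔅_2(a,b) ≤ C (|a|+|b−a|)^{−γ}` for all `(a, b−a) ≠ (0,0)`, and consequently, for any
`q_1, q_2 ≥ 0` with `q_1 + q_2 ≤ γ`,
`𝔅_2(a,b) ≤ C |a|^{−q_1} |b−a|^{−q_2} |b|^{−γ+q_1+q_2}` whenever `a, b−a, b ≠ 0`. -/
theorem B2_bounds (α β γ : ℝ) (hα : α ∈ Set.Ioo (0 : ℝ) 1) (hβ : β ∈ Set.Ioo (0 : ℝ) 1)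
    (hγ : γ ∈ Set.Ioo (0 : ℝ) 1) :
    (α + γ > 1 → ∀ q : ℝ, q ∈ Set.Icc 0 (1 - α) →
      ∃ C : ℝ, 0 < C ∧ ∀ a b : ℝ, a ≠ 0 → b - a ≠ 0 →
        B2 α β γ a b ≤ ENNReal.ofReal (C * |a| ^ (-q) * |b - a| ^ (-γ + q))) ∧
    (α + γ < 1 →
      ∃ C : ℝ, 0 < C ∧
        (∀ a b : ℝ, ¬(a = 0 ∧ b - a = 0) →
          B2 α β γ a b ≤ ENNReal.ofReal (C * (|a| + |b - a|) ^ (-γ))) ∧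
        (∀ q1 q2 : ℝ, 0 ≤ q1 → 0 ≤ q2 → q1 + q2 ≤ γ →
          ∀ a b : ℝ, a ≠ 0 → b - a ≠ 0 → b ≠ 0 →
            B2 α β γ a b ≤
              ENNReal.ofReal (C * |a| ^ (-q1) * |b - a| ^ (-q2) *
                |b| ^ (-γ + q1 + q2)))) := by
  obtain ⟨hα₀, hα₁⟩ := hα
  obtain ⟨hγ₀, hγ₁⟩ := hγ
  refine ⟨fun hαγ q hq =>
    exists_B2_le_of_one_lt_add hα₀.le hα₁ hβ.1.le hγ₀.le hγ₁ hαγ hq.1 hq.2, fun hαγ => ?_⟩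
  obtain ⟨C, hC, h_bound⟩ := exists_B2_le_rpow_abs_add_abs hα₀ hβ.1.le hγ₀.le hαγ
  refine ⟨C, hC, h_bound, fun q₁ q₂ hq₁ hq₂ hq a b ha hd hb =>
    (h_bound a b fun h => ha h.1).trans (ENNReal.ofReal_le_ofReal ?_)⟩
  have h_triangle : |b| ≤ |a| + |b - a| := by simpa using abs_add_le a (b - a)
  rw [mul_assoc, mul_assoc]
  gcongr
  simpa only [mul_assoc] using rpow_neg_add_le_rpow_neg_mul_rpow_neg_mul_rpow (abs_pos.2 ha)
    (abs_pos.2 hd) (abs_pos.2 hb) h_triangle hq₁ hq₂ hq
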